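/- Let T be a metric tree (an ℝ-tree or a simplicial tree with path metric) and φ : T → T' an (L,C) quasi-isometry between trees. Then for every geodesic ray ρ : ℝ≥0 → T, the image φ ∘ ρ is within bounded Hausdorff distance of a geodesic ray in T', and this geodesic ray is unique up to finite Hausdorff distance. -/

import Mathlib

open Metric EMetric

/-- `φ` is an `(L,C)` quasi-isometric embedding. -/
def IsQIE {X Y : Type*} [MetricSpace X] [MetricSpace Y] (L C : ℝ) (φ : X → Y) : Prop :=
  ∀ x₁ x₂ : X, dist x₁ x₂ / L - C ≤ dist (φ x₁) (φ x₂) ∧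
    dist (φ x₁) (φ x₂) ≤ L * dist x₁ x₂ + C

/-- `ρ : ℝ → X` restricted to `[0,∞)` is a geodesic ray (a unit-speed isometric
embedding of `ℝ≥0`). -/
def IsGeodesicRay {X : Type*} [MetricSpace X] (ρ : ℝ → X) : Prop :=
  ∀ s t : ℝ, 0 ≤ s → 0 ≤ t → dist (ρ s) (ρ t) = |s - t|

/-- A metric space is a metric tree if it is geodesic and `0`-hyperbolic
(four-point condition with `δ = 0`). -/
def IsMetricTree (X : Type*) [MetricSpace X] : Prop :=
  (∀ x y : X, ∃ f : ℝ → X, f 0 = x ∧ f (dist x y) = y ∧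
    ∀ s t : ℝ, s ∈ Set.Icc 0 (dist x y) → t ∈ Set.Icc 0 (dist x y) →
      dist (f s) (f t) = |s - t|) ∧
  (∀ x y z w : X, dist x y + dist z w ≤
    max (dist x z + dist y w) (dist x w + dist y z))

namespace Stmt15Aux
variable {X : Type*} [MetricSpace X]
noncomputable def gp (w x y : X) : ℝ := (dist w x + dist w y - dist x y) / 2
lemma gp_nonneg (w x y : X) : 0 ≤ gp w x y := by
  have h := dist_triangle x w y
  rw [dist_comm x w] at h
  unfold gp; linarith
lemma gp_le_left (w x y : X) : gp w x y ≤ dist w x := by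
  have h := dist_triangle w x y
  unfold gp; linarith
lemma gp_le_right (w x y : X) : gp w x y ≤ dist w y := by
  have h := dist_triangle w y x
  rw [dist_comm y x] at h
  unfold gp; linarith
lemma gp_comm (w x y : X) : gp w x y = gp w y x := by
  unfold gp; rw [dist_comm x y]; ring
lemma gp_add (w x y : X) : gp w x y + gp x w y = dist w x := by
  unfold gp; rw [dist_comm x w]; ring
lemma gp_mem_Icc (w x y : X) : gp w x y ∈ Set.Icc 0 (dist w y) :=
  ⟨gp_nonneg w x y, gp_le_right w x y⟩
section Geo
variable (h4 : ∀ x y z w : X, dist x y + dist z w ≤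
    max (dist x z + dist y w) (dist x w + dist y z))
variable {c x : X} {f : ℝ → X}
variable (hf0 : f 0 = c) (hfd : f (dist c x) = x)
  (hf : ∀ s t : ℝ, s ∈ Set.Icc 0 (dist c x) → t ∈ Set.Icc 0 (dist c x) →
    dist (f s) (f t) = |s - t|)
include hf0 hf in
lemma dist_f_c {s : ℝ} (hs : s ∈ Set.Icc 0 (dist c x)) : dist (f s) c = s := by
  have h := hf s 0 hs ⟨le_refl 0, dist_nonneg⟩
  rw [hf0] at h
  rw [h, sub_zero, abs_of_nonneg hs.1]
include hfd hf in
lemma dist_f_x {s : ℝ} (hs : s ∈ Set.Icc 0 (dist c x)) : dist (f s) x = dist c x - s := by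
  have h := hf s (dist c x) hs ⟨dist_nonneg, le_refl _⟩
  rw [hfd] at h
  rw [h, abs_of_nonpos (by linarith [hs.2]), neg_sub]
include h4 hf0 hfd hf in
lemma dist_to_f (z : X) {s : ℝ} (hs : s ∈ Set.Icc 0 (dist c x)) :
    dist z (f s) = gp z c x + |gp c z x - s| := by
  have hc := dist_f_c hf0 hf hs
  have hx := dist_f_x hfd hf hs
  have t1 := dist_triangle z (f s) c
  have t2 := dist_triangle z (f s) x
  have hzc : dist c z = dist z c := dist_comm c z
  have ha1 := le_abs_self (gp c z x - s)
  have ha2 := neg_abs_le (gp c z x - s)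
  apply le_antisymm
  · have h := h4 z (f s) c x
    rcases le_max_iff.mp h with h' | h' <;> (unfold gp at *; linarith)
  · rcases abs_cases (gp c z x - s) with ⟨h1, _⟩ | ⟨h1, _⟩ <;>
      (rw [h1]; unfold gp at *; linarith)

-- distance from z to its projection equals gp z c x
include h4 hf0 hfd hf in
lemma dist_proj (z : X) : dist z (f (gp c z x)) = gp z c x := by
  have := dist_to_f h4 hf0 hfd hf z (gp_mem_Icc c z x)
  simpa using this

include h4 hf0 hfd hf in
lemma abs_s_sub_le (z w : X) : |gp c z x - gp c w x| ≤ dist z w := by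
  have h1 := dist_to_f h4 hf0 hfd hf z (gp_mem_Icc c w x)
  have h2 := dist_to_f h4 hf0 hfd hf w (gp_mem_Icc c z x)
  have t1 := dist_triangle z w (f (gp c w x))
  have t2 := dist_triangle w z (f (gp c z x))
  have e1 := gp_nonneg z c x
  have e2 := gp_nonneg w c x
  have p1 := dist_proj h4 hf0 hfd hf z
  have p2 := dist_proj h4 hf0 hfd hf w
  rw [dist_comm w z] at t2
  rw [h1] at t1
  rw [h2] at t2
  have ha1 := le_abs_self (gp c z x - gp c w x)
  have ha2 := neg_abs_le (gp c z x - gp c w x)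
  have hb1 := le_abs_self (gp c w x - gp c z x)
  have hb2 := neg_abs_le (gp c w x - gp c z x)
  rw [abs_sub_comm (gp c w x) (gp c z x)] at t2
  rcases abs_cases (gp c z x - gp c w x) with ⟨h', _⟩ | ⟨h', _⟩ <;> (rw [h']; linarith)

include h4 hf0 hfd hf in
lemma dist_le_sum (z w : X) :
    dist z w ≤ gp z c x + gp w c x + |gp c z x - gp c w x| := by
  have h1 := dist_to_f h4 hf0 hfd hf z (gp_mem_Icc c w x)
  have t1 := dist_triangle z (f (gp c w x)) w
  have p2 := dist_proj h4 hf0 hfd hf w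
  rw [dist_comm (f (gp c w x)) w, p2] at t1
  rw [h1] at t1
  linarith

include h4 hf0 hfd hf in
lemma dist_ge_of_ne (z w : X) (hne : gp c z x ≠ gp c w x) :
    gp z c x + gp w c x + |gp c z x - gp c w x| ≤ dist z w := by
  have hz := gp_mem_Icc c z x
  have hw := gp_mem_Icc c w x
  have h1 := dist_to_f h4 hf0 hfd hf z hw   -- dist z (f sw)
  have h2 := dist_to_f h4 hf0 hfd hf w hz   -- dist w (f sz)
  have h3 := hf (gp c w x) (gp c z x) hw hz -- dist (f sw) (f sz)
  have p1 := dist_proj h4 hf0 hfd hf z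
  have p2 := dist_proj h4 hf0 hfd hf w
  have key := h4 z (f (gp c w x)) w (f (gp c z x))
  have hΔ : 0 < |gp c z x - gp c w x| := abs_pos.mpr (sub_ne_zero.mpr hne)
  rw [h1, h2, h3, p1, dist_comm (f (gp c w x)) w, p2] at key
  rw [abs_sub_comm (gp c w x) (gp c z x)] at key
  have habs : |gp c z x - gp c w x| = |gp c z x - gp c w x| := rfl
  rcases le_max_iff.mp key with h' | h'
  · linarith
  · linarith

include h4 hf0 hfd hf in
lemma gp_le_dist_add (z w : X) : gp z c x ≤ dist z w + gp w c x := by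
  have h1 := dist_to_f h4 hf0 hfd hf z (gp_mem_Icc c w x)
  have t1 := dist_triangle z w (f (gp c w x))
  have p2 := dist_proj h4 hf0 hfd hf w
  have habs := abs_nonneg (gp c z x - gp c w x)
  rw [p2] at t1
  rw [h1] at t1
  linarith
end Geo

lemma geo_agree
    (h4 : ∀ x y z w : X, dist x y + dist z w ≤
      max (dist x z + dist y w) (dist x w + dist y z))
    {c x y : X} {f g : ℝ → X}
    (hf0 : f 0 = c) (hfd : f (dist c x) = x)
    (hf : ∀ s t : ℝ, s ∈ Set.Icc 0 (dist c x) → t ∈ Set.Icc 0 (dist c x) →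
      dist (f s) (f t) = |s - t|)
    (hg0 : g 0 = c) (hgd : g (dist c y) = y)
    (hg : ∀ s t : ℝ, s ∈ Set.Icc 0 (dist c y) → t ∈ Set.Icc 0 (dist c y) →
      dist (g s) (g t) = |s - t|)
    {t : ℝ} (ht0 : 0 ≤ t) (ht : t ≤ gp c x y) : f t = g t := by
  have htx : t ∈ Set.Icc 0 (dist c x) := ⟨ht0, ht.trans (gp_le_left c x y)⟩
  have hty : t ∈ Set.Icc 0 (dist c y) := ⟨ht0, ht.trans (gp_le_right c x y)⟩
  have hyft : dist y (f t) = dist c y - t := by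
    have h1 := dist_to_f h4 hf0 hfd hf y htx
    have h2 : gp c y x = gp c x y := gp_comm c y x
    have h3 := gp_add y c x
    rw [h2] at h1
    rw [dist_comm y c] at h3
    rw [h2] at h3
    rw [h1, abs_of_nonneg (by linarith : (0:ℝ) ≤ gp c x y - t)]
    linarith
  have hftc : dist (f t) c = t := dist_f_c hf0 hf htx
  have key := dist_to_f h4 hg0 hgd hg (f t) hty
  have e1 : gp (f t) c y = 0 := by
    unfold gp
    rw [hftc, dist_comm (f t) y, hyft]; ring
  have e2 : gp c (f t) y = t := by
    unfold gp
    rw [dist_comm c (f t), hftc, dist_comm (f t) y, hyft]; ring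
  rw [e1, e2, sub_self, abs_zero, add_zero] at key
  exact dist_eq_zero.mp key


lemma morse1
    (h4 : ∀ x y z w : X, dist x y + dist z w ≤
      max (dist x z + dist y w) (dist x w + dist y z))
    {L C : ℝ} (hL : 1 ≤ L) (hC : 0 ≤ C)
    (q : ℝ → X)
    (hq1 : ∀ a b : ℝ, 0 ≤ a → 0 ≤ b → dist (q a) (q b) ≤ L * |a - b| + C)
    (hq2 : ∀ a b : ℝ, 0 ≤ a → 0 ≤ b → |a - b| / L - C ≤ dist (q a) (q b))
    {n : ℝ} (hn : 0 ≤ n)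
    {f : ℝ → X} (hf0 : f 0 = q 0) (hfd : f (dist (q 0) (q n)) = q n)
    (hf : ∀ s t : ℝ, s ∈ Set.Icc 0 (dist (q 0) (q n)) → t ∈ Set.Icc 0 (dist (q 0) (q n)) →
      dist (f s) (f t) = |s - t|)
    {t : ℝ} (ht0 : 0 ≤ t) (htn : t ≤ n) :
    gp (q t) (q 0) (q n) ≤ L^2*(4*L+5*C) + L + 2*C := by
  have hL0 : (0:ℝ) < L := by linarith
  have hA0 : (0:ℝ) < L + C := by linarith
  -- convenient quasigeodesic upper bound
  have hq1' : ∀ a b : ℝ, 0 ≤ a → 0 ≤ b → a ≤ b → dist (q a) (q b) ≤ L * (b - a) + C := by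
    intro a b ha hb hab
    have := hq1 a b ha hb
    rwa [abs_sub_comm, abs_of_nonneg (by linarith)] at this
  have hΔ : ∀ u v : ℝ, |gp (q 0) (q u) (q n) - gp (q 0) (q v) (q n)| ≤ dist (q u) (q v) :=
    fun u v => abs_s_sub_le h4 hf0 hfd hf (q u) (q v)
  have hup : ∀ u v : ℝ, dist (q u) (q v) ≤
      gp (q u) (q 0) (q n) + gp (q v) (q 0) (q n) +
      |gp (q 0) (q u) (q n) - gp (q 0) (q v) (q n)| :=
    fun u v => dist_le_sum h4 hf0 hfd hf (q u) (q v)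
  have hsep : ∀ u v : ℝ, 0 ≤ u → 0 ≤ v → |u - v| ≤ 1 →
      L + C < gp (q u) (q 0) (q n) → L + C < gp (q v) (q 0) (q n) →
      gp (q 0) (q u) (q n) = gp (q 0) (q v) (q n) := by
    intro u v hu hv huv h1 h2
    by_contra hne
    have hge := dist_ge_of_ne h4 hf0 hfd hf (q u) (q v) hne
    have hd := hq1 u v hu hv
    have hmul : L * |u - v| ≤ L * 1 := mul_le_mul_of_nonneg_left huv hL0.le
    have habs := abs_nonneg (gp (q 0) (q u) (q n) - gp (q 0) (q v) (q n))
    linarith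
  -- left stopping time
  have hPex : ∃ j : ℕ, t - (j:ℝ) ≤ 1 ∨ gp (q (t - j)) (q 0) (q n) ≤ L + C :=
    ⟨⌈t⌉₊, Or.inl (by linarith [Nat.le_ceil t])⟩
  set j1 := Nat.find hPex with hj1def
  have hu1a : 0 ≤ t - (j1:ℝ) := by
    rcases Nat.eq_zero_or_pos j1 with h0 | hpos
    · rw [h0]; simpa using ht0
    · have hmin := Nat.find_min hPex (Nat.sub_lt hpos one_pos)
      push_neg at hmin
      have hc : ((j1 - 1 : ℕ):ℝ) = (j1:ℝ) - 1 := by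
        rw [Nat.cast_sub hpos]; norm_num
      rw [hc] at hmin
      linarith [hmin.1]
  have hu1t : t - (j1:ℝ) ≤ t := by
    have : (0:ℝ) ≤ j1 := Nat.cast_nonneg j1
    linarith
  have he_u1 : gp (q (t - j1)) (q 0) (q n) ≤ L + C := by
    rcases Nat.find_spec hPex with h | h
    · have hd := hq1' 0 (t - j1) le_rfl hu1a hu1a
      have hle := gp_le_left (q (t - j1)) (q 0) (q n)
      rw [dist_comm] at hd
      have hmul : L * (t - (j1:ℝ) - 0) ≤ L * 1 := by
        apply mul_le_mul_of_nonneg_left _ hL0.le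
        linarith
      linarith
    · exact h
  have hchainL : ∀ j : ℕ, j < j1 → gp (q 0) (q (t - j)) (q n) = gp (q 0) (q t) (q n) := by
    intro j hj
    induction j with
    | zero => norm_num
    | succ k ih =>
      have hk : k < j1 := Nat.lt_of_succ_lt hj
      have h1 := Nat.find_min hPex hk
      have h2 := Nat.find_min hPex hj
      push_neg at h1 h2
      have hcast : ((k+1:ℕ):ℝ) = (k:ℝ)+1 := by push_cast; ring
      rw [hcast] at h2 ⊢
      have hs := hsep (t - ((k:ℝ)+1)) (t - k) (by linarith [h2.1]) (by linarith [h1.1])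
        (by rw [show t - ((k:ℝ)+1) - (t - k) = -1 by ring]; norm_num) h2.2 h1.2
      rw [hs, ih hk]
  have hs_u1 : |gp (q 0) (q (t - j1)) (q n) - gp (q 0) (q t) (q n)| ≤ L + C := by
    rcases Nat.eq_zero_or_pos j1 with h0 | hpos
    · simp only [h0, Nat.cast_zero, sub_zero, sub_self, abs_zero]
      linarith
    · have hch := hchainL (j1 - 1) (Nat.sub_lt hpos one_pos)
      have hc : ((j1 - 1 : ℕ):ℝ) = (j1:ℝ) - 1 := by
        rw [Nat.cast_sub hpos]; norm_num
      rw [hc] at hch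
      have hd := hq1' (t - j1) (t - ((j1:ℝ) - 1)) hu1a (by linarith) (by linarith)
      have habs := hΔ (t - (j1:ℝ)) (t - ((j1:ℝ)-1))
      rw [hch] at habs
      have : L * (t - ((j1:ℝ)-1) - (t - j1)) = L * 1 := by ring_nf
      calc |gp (q 0) (q (t - (j1:ℝ))) (q n) - gp (q 0) (q t) (q n)|
          ≤ dist (q (t - (j1:ℝ))) (q (t - ((j1:ℝ)-1))) := habs
        _ ≤ L * (t - ((j1:ℝ)-1) - (t - j1)) + C := hd
        _ ≤ L + C := by nlinarith
  -- right stopping time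
  have hQex : ∃ j : ℕ, n - 1 ≤ t + (j:ℝ) ∨ gp (q (t + j)) (q 0) (q n) ≤ L + C :=
    ⟨⌈n⌉₊, Or.inl (by linarith [Nat.le_ceil n])⟩
  set j2 := Nat.find hQex with hj2def
  set u2 := min (t + (j2:ℝ)) n with hu2def
  have hu2a : 0 ≤ u2 := le_min (by linarith [(Nat.cast_nonneg j2 : (0:ℝ) ≤ (j2:ℝ))]) hn
  have ht_u2 : t ≤ u2 := le_min (by linarith [(Nat.cast_nonneg j2 : (0:ℝ) ≤ (j2:ℝ))]) htn
  have hu2n : u2 ≤ n := min_le_right _ _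
  have he_u2 : gp (q u2) (q 0) (q n) ≤ L + C := by
    rcases le_total (t + (j2:ℝ)) n with hle | hge
    · rw [hu2def, min_eq_left hle]
      rcases Nat.find_spec hQex with h | h
      · have hd := hq1' (t + j2) n (by linarith [(Nat.cast_nonneg j2 : (0:ℝ) ≤ (j2:ℝ))]) hn hle
        have hle2 := gp_le_right (q (t + (j2:ℝ))) (q 0) (q n)
        have hmul : L * (n - (t + (j2:ℝ))) ≤ L * 1 := by
          apply mul_le_mul_of_nonneg_left _ hL0.le
          linarith
        linarith
      · exact h
    · rw [hu2def, min_eq_right hge]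
      have : gp (q n) (q 0) (q n) = 0 := by
        unfold gp; rw [dist_self, dist_comm]; ring
      linarith
  have hchainR : ∀ j : ℕ, j < j2 → gp (q 0) (q (t + j)) (q n) = gp (q 0) (q t) (q n) := by
    intro j hj
    induction j with
    | zero => norm_num
    | succ k ih =>
      have hk : k < j2 := Nat.lt_of_succ_lt hj
      have h1 := Nat.find_min hQex hk
      have h2 := Nat.find_min hQex hj
      push_neg at h1 h2
      have hcast : ((k+1:ℕ):ℝ) = (k:ℝ)+1 := by push_cast; ring
      rw [hcast] at h2 ⊢
      have hs := hsep (t + ((k:ℝ)+1)) (t + k) (by linarith [(Nat.cast_nonneg k : (0:ℝ) ≤ (k:ℝ))]) (by linarith [(Nat.cast_nonneg k : (0:ℝ) ≤ (k:ℝ))])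
        (by rw [show t + ((k:ℝ)+1) - (t + k) = 1 by ring]; norm_num) h2.2 h1.2
      rw [hs, ih hk]
  have hs_u2 : |gp (q 0) (q u2) (q n) - gp (q 0) (q t) (q n)| ≤ L + C := by
    rcases Nat.eq_zero_or_pos j2 with h0 | hpos
    · rw [hu2def, h0]
      simp only [Nat.cast_zero, add_zero, min_eq_left htn, sub_self, abs_zero]
      linarith
    · have hch := hchainR (j2 - 1) (Nat.sub_lt hpos one_pos)
      have hc : ((j2 - 1 : ℕ):ℝ) = (j2:ℝ) - 1 := by
        rw [Nat.cast_sub hpos]; norm_num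
      rw [hc] at hch
      have hmin := Nat.find_min hQex (Nat.sub_lt hpos one_pos)
      push_neg at hmin
      rw [hc] at hmin
      -- t + (j2 - 1) ≤ u2 ≤ t + j2
      have hb1 : t + ((j2:ℝ) - 1) ≤ u2 := le_min (by linarith) (by linarith [hmin.1])
      have hd := hq1' (t + ((j2:ℝ)-1)) u2 (by linarith) hu2a hb1
      have habs := hΔ u2 (t + ((j2:ℝ)-1))
      rw [hch] at habs
      have hb2 : u2 ≤ t + (j2:ℝ) := min_le_left _ _
      calc |gp (q 0) (q u2) (q n) - gp (q 0) (q t) (q n)| ≤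
          dist (q u2) (q (t + ((j2:ℝ)-1))) := habs
        _ = dist (q (t + ((j2:ℝ)-1))) (q u2) := dist_comm _ _
        _ ≤ L * (u2 - (t + ((j2:ℝ)-1))) + C := hd
        _ ≤ L + C := by nlinarith
  -- combine
  have habs12 : |gp (q 0) (q (t - (j1:ℝ))) (q n) - gp (q 0) (q u2) (q n)| ≤ 2*(L+C) := by
    calc |gp (q 0) (q (t - (j1:ℝ))) (q n) - gp (q 0) (q u2) (q n)|
        ≤ |gp (q 0) (q (t - (j1:ℝ))) (q n) - gp (q 0) (q t) (q n)| +
          |gp (q 0) (q t) (q n) - gp (q 0) (q u2) (q n)| := abs_sub_le _ _ _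
      _ ≤ 2*(L+C) := by
          rw [abs_sub_comm (gp (q 0) (q t) (q n))]
          linarith
  have hd12 : dist (q (t - (j1:ℝ))) (q u2) ≤ 4*(L+C) := by
    have := hup (t - (j1:ℝ)) u2
    linarith
  have hlow := hq2 (t - (j1:ℝ)) u2 hu1a hu2a
  rw [abs_sub_comm, abs_of_nonneg (by linarith)] at hlow
  have hlen : u2 - (t - (j1:ℝ)) ≤ L * (4*L + 5*C) := by
    have h' : (u2 - (t - (j1:ℝ))) / L ≤ 4*(L+C) + C := by linarith
    rw [div_le_iff₀ hL0] at h'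
    calc u2 - (t - (j1:ℝ)) ≤ (4*(L+C)+C)*L := h'
      _ = L*(4*L+5*C) := by ring
  have hfin : gp (q t) (q 0) (q n) ≤ dist (q t) (q (t - (j1:ℝ))) + gp (q (t - (j1:ℝ))) (q 0) (q n) :=
    gp_le_dist_add h4 hf0 hfd hf (q t) (q (t - (j1:ℝ)))
  have hdt : dist (q t) (q (t - (j1:ℝ))) ≤ L * (t - (t - (j1:ℝ))) + C := by
    rw [dist_comm]
    exact hq1' _ _ hu1a ht0 hu1t
  have hmul2 : L * (t - (t - (j1:ℝ))) ≤ L * (L * (4*L+5*C)) := by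
    apply mul_le_mul_of_nonneg_left _ hL0.le
    linarith
  nlinarith


lemma gp_self_right (w x : X) : gp w x x = dist w x := by
  unfold gp; rw [dist_self]; ring

lemma gp_self_left (w y : X) : gp w w y = 0 := by
  unfold gp; rw [dist_self, dist_comm]; ring

lemma main_construction
    (hgeo : ∀ x y : X, ∃ f : ℝ → X, f 0 = x ∧ f (dist x y) = y ∧
      ∀ s t : ℝ, s ∈ Set.Icc 0 (dist x y) → t ∈ Set.Icc 0 (dist x y) →
        dist (f s) (f t) = |s - t|)
    (h4 : ∀ x y z w : X, dist x y + dist z w ≤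
      max (dist x z + dist y w) (dist x w + dist y z))
    {L C : ℝ} (hL : 1 ≤ L) (hC : 0 ≤ C)
    (q : ℝ → X)
    (hq1 : ∀ a b : ℝ, 0 ≤ a → 0 ≤ b → dist (q a) (q b) ≤ L * |a - b| + C)
    (hq2 : ∀ a b : ℝ, 0 ≤ a → 0 ≤ b → |a - b| / L - C ≤ dist (q a) (q b)) :
    ∃ ray : ℝ → X, (∀ s t : ℝ, 0 ≤ s → 0 ≤ t → dist (ray s) (ray t) = |s - t|) ∧
      EMetric.hausdorffEdist (q '' Set.Ici 0) (ray '' Set.Ici 0) ≠ ⊤ := by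
  have hL0 : (0:ℝ) < L := by linarith
  set D1 : ℝ := L^2*(4*L+5*C) + L + 2*C with hD1def
  have hD1 : 0 ≤ D1 := by nlinarith
  choose f hf0 hfd hfiso using fun n : ℕ => hgeo (q 0) (q n)
  have hmorse : ∀ (n : ℕ) (t : ℝ), 0 ≤ t → t ≤ (n:ℝ) →
      gp (q t) (q 0) (q n) ≤ D1 := by
    intro n t h1 h2
    exact morse1 h4 hL hC q hq1 hq2 (Nat.cast_nonneg n) (hf0 n) (hfd n) (hfiso n) h1 h2
  have hgp_low : ∀ m n : ℕ, m ≤ n → (m:ℝ)/L - C - D1 ≤ gp (q 0) (q m) (q n) := by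
    intro m n hmn
    have hadd := gp_add (q 0) (q m) (q n)
    have hdist := hq2 0 m le_rfl (Nat.cast_nonneg m)
    rw [abs_sub_comm, sub_zero, abs_of_nonneg (Nat.cast_nonneg m)] at hdist
    have hm := hmorse n m (Nat.cast_nonneg m) (by exact_mod_cast hmn)
    linarith
  have hgp : ∀ t : ℝ, 0 ≤ t → ∀ m n : ℕ, L*(t + C + D1) ≤ (m:ℝ) → L*(t + C + D1) ≤ (n:ℝ) →
      t ≤ gp (q 0) (q m) (q n) := by
    intro t ht m n hm hn
    have key : ∀ m n : ℕ, m ≤ n → L*(t + C + D1) ≤ (m:ℝ) → t ≤ gp (q 0) (q m) (q n) := by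
      intro m n hmn hm
      have h1 := hgp_low m n hmn
      have h2 : t + C + D1 ≤ (m:ℝ)/L := by
        rw [le_div_iff₀ hL0]
        calc (t + C + D1) * L = L * (t + C + D1) := by ring
          _ ≤ (m:ℝ) := hm
      linarith
    rcases le_total m n with h | h
    · exact key m n h hm
    · rw [gp_comm]
      exact key n m h hn
  set N : ℝ → ℕ := fun s => ⌈L*(max s 0 + C + D1)⌉₊ with hNdef
  have hN : ∀ s : ℝ, 0 ≤ s → L*(s + C + D1) ≤ (N s : ℝ) := by
    intro s hs
    simp only [hNdef]
    rw [max_eq_left hs]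
    exact Nat.le_ceil _
  set ray : ℝ → X := fun s => f (N s) (max s 0) with hraydef
  have ray_eq : ∀ s : ℝ, 0 ≤ s → ∀ n : ℕ, L*(s + C + D1) ≤ (n:ℝ) → ray s = f n s := by
    intro s hs n hn
    have hmax : max s 0 = s := max_eq_left hs
    show f (N s) (max s 0) = f n s
    rw [hmax]
    exact geo_agree h4 (hf0 (N s)) (hfd (N s)) (hfiso (N s)) (hf0 n) (hfd n) (hfiso n) hs
      (hgp s hs (N s) n (hN s hs) hn)
  have hray_geo : ∀ s t : ℝ, 0 ≤ s → 0 ≤ t → dist (ray s) (ray t) = |s - t| := by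
    intro s t hs ht
    set n : ℕ := max (N s) (N t) with hndef
    have hns : L*(s + C + D1) ≤ (n:ℝ) :=
      le_trans (hN s hs) (Nat.cast_le.mpr (le_max_left _ _))
    have hnt : L*(t + C + D1) ≤ (n:ℝ) :=
      le_trans (hN t ht) (Nat.cast_le.mpr (le_max_right _ _))
    have h1 := ray_eq s hs n hns
    have h2 := ray_eq t ht n hnt
    have hsd : s ≤ dist (q 0) (q n) :=
      le_trans (hgp s hs n n hns hns) (by rw [gp_self_right])
    have htd : t ≤ dist (q 0) (q n) :=
      le_trans (hgp t ht n n hnt hnt) (by rw [gp_self_right])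
    rw [h1, h2]
    exact hfiso n s t ⟨hs, hsd⟩ ⟨ht, htd⟩
  refine ⟨ray, hray_geo, ?_⟩
  set D2 : ℝ := D1 + L + C with hD2def
  have hD2 : 0 ≤ D2 := by linarith
  have hle : EMetric.hausdorffEdist (q '' Set.Ici 0) (ray '' Set.Ici 0) ≤ ENNReal.ofReal D2 := by
    apply EMetric.hausdorffEdist_le_of_mem_edist
    · rintro x ⟨t, ht, rfl⟩
      rw [Set.mem_Ici] at ht
      set n : ℕ := max ⌈t⌉₊ ⌈L*((L*t + C) + C + D1)⌉₊ with hndef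
      have hn1 : t ≤ (n:ℝ) :=
        le_trans (Nat.le_ceil t) (Nat.cast_le.mpr (le_max_left _ _))
      have hn2 : L*((L*t + C) + C + D1) ≤ (n:ℝ) :=
        le_trans (Nat.le_ceil _) (Nat.cast_le.mpr (le_max_right _ _))
      set s : ℝ := gp (q 0) (q t) (q n) with hsdef
      have hs0 : 0 ≤ s := gp_nonneg _ _ _
      have hs1 : s ≤ L*t + C := by
        have h1 := gp_le_left (q 0) (q t) (q n)
        have h2 := hq1 0 t le_rfl ht
        rw [abs_sub_comm, sub_zero, abs_of_nonneg ht] at h2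
        linarith
      have hrs : ray s = f n s := by
        apply ray_eq s hs0 n
        calc L*(s + C + D1) ≤ L*((L*t + C) + C + D1) :=
              mul_le_mul_of_nonneg_left (by linarith) hL0.le
          _ ≤ (n:ℝ) := hn2
      have hd : dist (q t) (ray s) ≤ D2 := by
        rw [hrs, hsdef]
        have := dist_proj h4 (hf0 n) (hfd n) (hfiso n) (q t)
        rw [this]
        have := hmorse n t ht hn1
        linarith
      exact ⟨ray s, ⟨s, Set.mem_Ici.mpr hs0, rfl⟩, by
        rw [edist_dist]
        exact ENNReal.ofReal_le_ofReal hd⟩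
    · rintro x ⟨s, hs, rfl⟩
      rw [Set.mem_Ici] at hs
      set n : ℕ := N s with hndef
      have hrs : ray s = f n s := ray_eq s hs n (hN s hs)
      have hsd : s ≤ dist (q 0) (q n) :=
        le_trans (hgp s hs n n (hN s hs) (hN s hs)) (by rw [gp_self_right])
      have hIVT : ∃ j : ℕ, s ≤ gp (q 0) (q j) (q n) := by
        refine ⟨n, ?_⟩
        rw [gp_self_right]
        exact hsd
      set j0 := Nat.find hIVT with hj0def
      have hj0 : s ≤ gp (q 0) (q (j0:ℝ)) (q (n:ℝ)) := Nat.find_spec hIVT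
      have hj0n : j0 ≤ n := Nat.find_le (by rw [gp_self_right]; exact hsd)
      rcases Nat.eq_zero_or_pos j0 with h0 | hpos
      · -- s = 0, ray s = q 0
        rw [h0, Nat.cast_zero, gp_self_left] at hj0
        have hs0 : s = 0 := le_antisymm hj0 hs
        refine ⟨q 0, ⟨0, Set.mem_Ici.mpr le_rfl, rfl⟩, ?_⟩
        rw [hrs, hs0, hf0 n, edist_self]
        exact zero_le
      · have hprev : gp (q 0) (q ((j0 - 1 : ℕ):ℝ)) (q (n:ℝ)) < s :=
          not_le.mp (Nat.find_min hIVT (Nat.sub_lt hpos one_pos))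
        have hc : ((j0 - 1 : ℕ):ℝ) = (j0:ℝ) - 1 := by
          rw [Nat.cast_sub hpos]; norm_num
        have hd : dist (ray s) (q j0) ≤ D2 := by
          rw [hrs, dist_comm]
          have hmem : s ∈ Set.Icc 0 (dist (q 0) (q n)) := ⟨hs, hsd⟩
          have hdf := dist_to_f h4 (hf0 n) (hfd n) (hfiso n) (q j0) hmem
          rw [hdf]
          have he := hmorse n j0 (Nat.cast_nonneg j0) (by exact_mod_cast hj0n)
          have hΔ := abs_s_sub_le h4 (hf0 n) (hfd n) (hfiso n) (q j0) (q (j0 - 1 : ℕ))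
          have hdq : dist (q j0) (q (j0 - 1 : ℕ)) ≤ L + C := by
            have hb := hq1 j0 (j0 - 1 : ℕ) (Nat.cast_nonneg j0) (Nat.cast_nonneg _)
            have harg : |(j0:ℝ) - ((j0 - 1 : ℕ):ℝ)| = 1 := by
              rw [hc, show (j0:ℝ) - ((j0:ℝ) - 1) = 1 by ring, abs_one]
            rw [harg, mul_one] at hb
            exact hb
          have habs : |gp (q 0) (q j0) (q n) - s| ≤ L + C := by
            rw [abs_of_nonneg (by linarith [hj0] : (0:ℝ) ≤ gp (q 0) (q j0) (q n) - s)]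
            have h1 := le_abs_self (gp (q 0) (q j0) (q n) - gp (q 0) (q (j0 - 1 : ℕ)) (q n))
            linarith
          linarith
        exact ⟨q j0, ⟨(j0:ℝ), Set.mem_Ici.mpr (Nat.cast_nonneg j0), rfl⟩, by
          rw [edist_dist]
          exact ENNReal.ofReal_le_ofReal hd⟩
  exact ne_top_of_le_ne_top ENNReal.ofReal_ne_top hle

end Stmt15Aux

/-- Morse stability of quasi-geodesic rays in metric trees: the image of a geodesic ray
under a quasi-isometry of trees is within finite Hausdorff distance of a geodesic ray,
unique up to finite Hausdorff distance. -/
theorem stmt_15 {T T' : Type*} [MetricSpace T] [MetricSpace T']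
    (hT : IsMetricTree T) (hT' : IsMetricTree T')
    (L C : ℝ) (hL : 1 ≤ L) (hC : 0 ≤ C) (φ : T → T')
    (hφemb : IsQIE L C φ) (hφdense : ∃ D : ℝ, ∀ y : T', ∃ x : T, dist y (φ x) ≤ D)
    (ρ : ℝ → T) (hρ : IsGeodesicRay ρ) :
    ∃ ray : ℝ → T', IsGeodesicRay ray ∧
      hausdorffEdist ((φ ∘ ρ) '' Set.Ici 0) (ray '' Set.Ici 0) ≠ ⊤ ∧
      ∀ ray' : ℝ → T', IsGeodesicRay ray' →
        hausdorffEdist ((φ ∘ ρ) '' Set.Ici 0) (ray' '' Set.Ici 0) ≠ ⊤ →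
        hausdorffEdist (ray '' Set.Ici 0) (ray' '' Set.Ici 0) ≠ ⊤ := by
  obtain ⟨hgeo', h4'⟩ := hT'
  have hq1 : ∀ a b : ℝ, 0 ≤ a → 0 ≤ b → dist ((φ ∘ ρ) a) ((φ ∘ ρ) b) ≤ L * |a - b| + C := by
    intro a b ha hb
    have h := (hφemb (ρ a) (ρ b)).2
    rw [hρ a b ha hb] at h
    exact h
  have hq2 : ∀ a b : ℝ, 0 ≤ a → 0 ≤ b → |a - b| / L - C ≤ dist ((φ ∘ ρ) a) ((φ ∘ ρ) b) := by
    intro a b ha hb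
    have h := (hφemb (ρ a) (ρ b)).1
    rw [hρ a b ha hb] at h
    exact h
  obtain ⟨ray, hraygeo, hfin⟩ := Stmt15Aux.main_construction hgeo' h4' hL hC (φ ∘ ρ) hq1 hq2
  refine ⟨ray, hraygeo, hfin, ?_⟩
  intro ray' _ hfin'
  have htri := hausdorffEdist_triangle (s := ray '' Set.Ici 0) (t := (φ ∘ ρ) '' Set.Ici 0)
    (u := ray' '' Set.Ici 0)
  have h1 : hausdorffEdist (ray '' Set.Ici 0) ((φ ∘ ρ) '' Set.Ici 0) ≠ ⊤ := by
    show hausdorffEDist _ _ ≠ ⊤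
    rw [hausdorffEDist_comm]
    exact hfin
  exact ne_top_of_le_ne_top (ENNReal.add_ne_top.mpr ⟨h1, hfin'⟩) htri
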